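/- arXiv:2011.01665 — 5 statements merged into one kernel-verified Lean document; each statement's English description precedes it below -/
import Mathlib

section
/- Let ρ be a permutation of V, let A and D be additive subgroups of V, let φ : A → V be an additive homomorphism, and set U = {(a, φ(a) + d) : a ∈ A, d ∈ D} ⊆ V × V (an additive subgroup of V × V). If U is a linear block for ρ̄, then: (1) D ⊆ A; (2) φ(A) ⊆ A; (3) φ(D) ⊆ D. -/
open Pointwise

/-- `V n` is the vector space `𝔽₂ⁿ`. -/
abbrev V (n : ℕ) : Type := Fin n → ZMod 2

lemma V.add_self {n : ℕ} (a : V n) : a + a = 0 := by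
  funext i
  have h : ∀ x : ZMod 2, x + x = 0 := by decide
  exact h (a i)

/-- The Lai-Massey formal operator `ρ̄ (x, y) = (x + y, y + ρ (x + y))`. -/
def rhoBar {n : ℕ} (ρ : Equiv.Perm (V n)) : Equiv.Perm (V n × V n) where
  toFun p := (p.1 + p.2, p.2 + ρ (p.1 + p.2))
  invFun p := (p.1 + p.2 + ρ p.1, p.2 + ρ p.1)
  left_inv p := by
    obtain ⟨x, y⟩ := p
    simp only [Prod.mk.injEq]
    constructor
    · rw [show x + y + (y + ρ (x + y)) = x + (y + y) + ρ (x + y) by abel, V.add_self, add_zero,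
        add_assoc, V.add_self, add_zero]
    · rw [add_assoc, V.add_self, add_zero]
  right_inv p := by
    obtain ⟨u, v⟩ := p
    simp only [Prod.mk.injEq]
    have h1 : u + v + ρ u + (v + ρ u) = u := by
      rw [show u + v + ρ u + (v + ρ u) = u + (v + v) + (ρ u + ρ u) by abel, V.add_self, V.add_self,
        add_zero, add_zero]
    constructor
    · exact h1
    · rw [h1, add_assoc, V.add_self, add_zero]

/-- The Lai-Massey formal operator `θ̄ (x, y) = (θ (x + y), y)`. -/
def thetaBar {n : ℕ} (θ : V n ≃ₗ[ZMod 2] V n) : Equiv.Perm (V n × V n) where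
  toFun p := (θ (p.1 + p.2), p.2)
  invFun p := (θ.symm p.1 + p.2, p.2)
  left_inv p := by
    obtain ⟨x, y⟩ := p
    simp only [LinearEquiv.symm_apply_apply, Prod.mk.injEq]
    rw [add_assoc, V.add_self, add_zero]
    exact ⟨rfl, trivial⟩
  right_inv p := by
    obtain ⟨u, v⟩ := p
    simp only [Prod.mk.injEq]
    rw [add_assoc, V.add_self, add_zero, LinearEquiv.apply_symm_apply]
    exact ⟨rfl, trivial⟩

/-- A group `G` acts primitively on `X` if the action is transitive and every block of the
action is trivial (empty, a singleton, or all of `X`). -/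
def IsPrimitive (G : Type*) [Group G] (X : Type*) [MulAction G X] : Prop :=
  MulAction.IsPretransitive G X ∧
    ∀ B : Set X, MulAction.IsBlock G B → MulAction.IsTrivialBlock B

/-- An (additive) subset `U` of `V × V` is a linear block for a permutation `f` of `V × V`
if `f` maps every coset `U + p` onto some coset `U + q`. -/
def IsLinearBlock {n : ℕ} (f : Equiv.Perm (V n × V n)) (U : Set (V n × V n)) : Prop :=
  ∀ p : V n × V n, ∃ q : V n × V n, ⇑f '' (U + {p}) = U + {q}

theorem linear_block_conditions {n : ℕ} (hn : 1 ≤ n) (ρ : Equiv.Perm (V n))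
    (A D : AddSubgroup (V n)) (φ : A →+ V n)
    (h : IsLinearBlock (rhoBar ρ)
      {p : V n × V n | ∃ (a : A) (d : V n), d ∈ D ∧ p = ((a : V n), φ a + d)}) :
    ((D : Set (V n)) ⊆ (A : Set (V n))) ∧
    (∀ a : A, φ a ∈ A) ∧
    (∀ a : A, (a : V n) ∈ D → φ a ∈ D) := by

  set U : Set (V n × V n) := {p : V n × V n | ∃ (a : A) (d : V n), d ∈ D ∧ p = ((a : V n), φ a + d)} with hUdef
  have hchar : ∀ x : V n × V n, x + x = 0 := fun x => Prod.ext (V.add_self x.1) (V.add_self x.2)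
  have h0U : (0 : V n × V n) ∈ U := ⟨0, 0, D.zero_mem, by simp; rfl⟩
  have hUadd : ∀ x ∈ U, ∀ y ∈ U, x + y ∈ U := by
    rintro x ⟨a, d, hd, rfl⟩ y ⟨a', d', hd', rfl⟩
    refine ⟨a + a', d + d', D.add_mem hd hd', ?_⟩
    refine Prod.ext ?_ ?_
    · simp
    · simp [map_add]; abel
  have hmem : ∀ x p : V n × V n, x ∈ U + {p} ↔ ∃ w ∈ U, w + p = x := by
    intro x p
    simp only [Set.mem_add, Set.mem_singleton_iff, exists_eq_left]
  obtain ⟨q, hq⟩ := h 0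
  have hU0 : U + {(0 : V n × V n)} = U := by
    ext x
    simp only [Set.mem_add, Set.mem_singleton_iff, exists_eq_left, add_zero, exists_prop,
      exists_eq_right]
  rw [hU0] at hq
  have hwq : ∃ w ∈ U, w + q = rhoBar ρ 0 := by
    refine (hmem _ _).1 ?_
    rw [← hq]
    exact Set.mem_image_of_mem _ h0U
  obtain ⟨w, hwU, hwq⟩ := hwq
  have forward : ∀ u ∈ U, rhoBar ρ u + rhoBar ρ 0 ∈ U := by
    intro u hu
    have h1 : rhoBar ρ u ∈ U + {q} := hq ▸ Set.mem_image_of_mem _ hu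
    obtain ⟨w', hw'U, hw'q⟩ := (hmem _ _).1 h1
    have h2 : rhoBar ρ u + rhoBar ρ 0 = w' + w := by
      rw [← hwq, ← hw'q, show w' + q + (w + q) = w' + w + (q + q) from by abel, hchar, add_zero]
    rw [h2]
    exact hUadd _ hw'U _ hwU
  have backward : ∀ u ∈ U, (rhoBar ρ).symm (u + rhoBar ρ 0) ∈ U := by
    intro u hu
    have h1 : u + rhoBar ρ 0 ∈ U + {q} := by
      refine (hmem _ _).2 ⟨u + w, hUadd _ hu _ hwU, ?_⟩
      rw [add_assoc, hwq]
    rw [← hq] at h1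
    obtain ⟨v, hvU, hv⟩ := h1
    rw [← hv, Equiv.symm_apply_apply]
    exact hvU
  refine ⟨?_, ?_, ?_⟩
  · intro d hd
    have hU1 : ((0 : V n), d) ∈ U := ⟨0, d, hd, by simp⟩
    obtain ⟨a, d', hd', heq⟩ := forward _ hU1
    have h1 := congrArg Prod.fst heq
    have h2 : (rhoBar ρ ((0 : V n), d) + rhoBar ρ 0).1 = d := by
      simp [rhoBar, V.add_self]
    rw [h2] at h1
    rw [h1]
    exact a.2
  · intro a
    have hU1 : (((a : V n)), φ a) ∈ U := ⟨a, 0, D.zero_mem, by simp⟩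
    obtain ⟨b, d', hd', heq⟩ := forward _ hU1
    have h1 := congrArg Prod.fst heq
    have h2 : (rhoBar ρ (((a : V n)), φ a) + rhoBar ρ 0).1 = (a : V n) + φ a := by
      simp [rhoBar, V.add_self]
    rw [h2] at h1
    have h3 : (a : V n) + φ a ∈ A := h1 ▸ b.2
    have h4 : φ a = (a : V n) + ((a : V n) + φ a) := by
      rw [← add_assoc, V.add_self, zero_add]
    rw [h4]
    exact A.add_mem a.2 h3
  · intro a ha
    have hU1 : ((0 : V n), (a : V n)) ∈ U := ⟨0, (a : V n), ha, by simp⟩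
    have hb := backward _ hU1
    have hc : (rhoBar ρ).symm (((0 : V n), (a : V n)) + rhoBar ρ 0) = ((a : V n), (a : V n)) := by
      rw [Equiv.symm_apply_eq]
      refine Prod.ext ?_ ?_ <;> simp [rhoBar, V.add_self]
    rw [hc] at hb
    obtain ⟨b, d', hd', heq⟩ := hb
    have hb1 : (b : V n) = (a : V n) := (congrArg Prod.fst heq).symm
    have hba : b = a := Subtype.ext hb1
    have h2 : (a : V n) = φ a + d' := by
      have h3 := congrArg Prod.snd heq
      rw [hba] at h3
      exact h3
    have h4 : φ a = (a : V n) + d' := by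
      rw [h2, add_assoc, V.add_self, add_zero]
    rw [h4]
    exact D.add_mem ha hd'
end

section
/- Let ρ be a permutation of V, let A and D be additive subgroups of V, let φ : A → V be an additive homomorphism, and set U = {(a, φ(a) + d) : a ∈ A, d ∈ D} ⊆ V × V. If U is a linear block for ρ̄, then for every u ∈ V one has ρ(D + u) = D + ρ(u), where D + u denotes the coset {d + u : d ∈ D} in V. -/
open Pointwise

lemma V.two_mul_zero {n : ℕ} (a : V n) : 2 * a = 0 := by
  rw [two_mul]; exact V.add_self a

lemma key_lemma {n : ℕ} (ρ : Equiv.Perm (V n))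
    (A D : AddSubgroup (V n)) (φ : A →+ V n)
    (h : IsLinearBlock (rhoBar ρ)
      {p : V n × V n | ∃ (a : A) (d : V n), d ∈ D ∧ p = ((a : V n), φ a + d)}) :
    ∀ u : V n, ∀ d ∈ D, ρ (d + u) + ρ u ∈ D := by
  intro u d hd
  set U : Set (V n × V n) :=
    {p : V n × V n | ∃ (a : A) (d : V n), d ∈ D ∧ p = ((a : V n), φ a + d)} with hU
  obtain ⟨q, hq⟩ := h (u, 0)
  have hmem : ∀ (r x : V n × V n), x ∈ U + ({r} : Set (V n × V n)) ↔
      ∃ (a : A) (e : V n), e ∈ D ∧ x = ((a : V n) + r.1, φ a + e + r.2) := by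
    intro r x
    rw [Set.mem_add]
    constructor
    · rintro ⟨y, ⟨a, e, he, rfl⟩, z, hz, rfl⟩
      rw [Set.mem_singleton_iff] at hz; subst hz
      exact ⟨a, e, he, rfl⟩
    · rintro ⟨a, e, he, rfl⟩
      exact ⟨((a : V n), φ a + e), ⟨a, e, he, rfl⟩, r, rfl, rfl⟩
  -- Step A : image of (u,0)
  have hA : ((u, ρ u) : V n × V n) ∈ U + {q} := by
    rw [← hq]
    refine ⟨(u, 0), (hmem (u, 0) (u, 0)).2 ⟨0, 0, zero_mem _, by simp⟩, ?_⟩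
    show ((u + 0 : V n), (0 : V n) + ρ (u + 0)) = (u, ρ u)
    simp
  obtain ⟨a₀, d₀, hd₀, hA'⟩ := (hmem q _).1 hA
  have hu0 : u = (a₀ : V n) + q.1 := congrArg Prod.fst hA'
  have hρu : ρ u = φ a₀ + d₀ + q.2 := congrArg Prod.snd hA'
  -- Step B : (u, ρ u + d) ∈ U + {q}
  have hB : ((u, ρ u + d) : V n × V n) ∈ U + {q} := by
    refine (hmem q _).2 ⟨a₀, d₀ + d, D.add_mem hd₀ hd, ?_⟩
    rw [Prod.mk.injEq]
    exact ⟨hu0, by rw [hρu]; abel⟩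
  -- pull back through rhoBar
  rw [← hq] at hB
  obtain ⟨w, hw, hfw⟩ := hB
  have hwval : w = (u + d, d) := by
    rw [← Equiv.symm_apply_apply (rhoBar ρ) w, hfw]
    show (u + (ρ u + d) + ρ u, (ρ u + d) + ρ u) = (u + d, d)
    rw [Prod.mk.injEq]
    constructor <;> (abel_nf; simp [V.two_mul_zero])
  rw [hwval] at hw
  obtain ⟨b, d', hd', hbeq⟩ := (hmem (u, 0) _).1 hw
  have hb1 : u + d = (b : V n) + u := congrArg Prod.fst hbeq
  have hb2 : d = φ b + d' + 0 := congrArg Prod.snd hbeq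
  have hbv : (b : V n) = d := by
    linear_combination (norm := (abel_nf; simp [V.two_mul_zero])) hb1
  have hφb : φ b = d + d' := by
    linear_combination (norm := (abel_nf; simp [V.two_mul_zero])) hb2
  -- Step D : image of (u, d)
  have hD : ((u + d, d + ρ (u + d)) : V n × V n) ∈ U + {q} := by
    rw [← hq]
    refine ⟨(u, d), (hmem (u, 0) (u, d)).2 ⟨0, d, hd, by simp⟩, ?_⟩
    rfl
  obtain ⟨a₁, d₁, hd₁, hDeq⟩ := (hmem q _).1 hD
  have hD1 : u + d = (a₁ : V n) + q.1 := congrArg Prod.fst hDeq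
  have hD2 : d + ρ (u + d) = φ a₁ + d₁ + q.2 := congrArg Prod.snd hDeq
  have hcoe : (a₁ : V n) = ((a₀ + b : A) : V n) := by
    push_cast
    linear_combination (norm := (abel_nf; simp [V.two_mul_zero])) hD1 + hu0 + hbv
  have ha₁ : φ a₁ = φ a₀ + (d + d') := by
    rw [Subtype.ext hcoe, map_add, hφb]
  have hkey : ρ (d + u) + ρ u = d' + (d₁ + d₀) := by
    rw [add_comm d u]
    linear_combination (norm := (abel_nf; simp [V.two_mul_zero])) hD2 + hρu + ha₁
  rw [hkey]
  exact D.add_mem hd' (D.add_mem hd₁ hd₀)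

theorem linear_block_coset_compatibility {n : ℕ} (hn : 1 ≤ n) (ρ : Equiv.Perm (V n))
    (A D : AddSubgroup (V n)) (φ : A →+ V n)
    (h : IsLinearBlock (rhoBar ρ)
      {p : V n × V n | ∃ (a : A) (d : V n), d ∈ D ∧ p = ((a : V n), φ a + d)}) :
    ∀ u : V n, ⇑ρ '' ((D : Set (V n)) + {u}) = (D : Set (V n)) + {ρ u} := by
  intro u
  have key := key_lemma ρ A D φ h
  have hsub : ⇑ρ '' ((D : Set (V n)) + {u}) ⊆ (D : Set (V n)) + {ρ u} := by
    rintro _ ⟨x, hx, rfl⟩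
    rw [Set.add_singleton] at hx ⊢
    obtain ⟨d, hd, rfl⟩ := hx
    exact ⟨ρ (d + u) + ρ u, key u d hd, by abel_nf; simp [V.two_mul_zero]⟩
  have h1 : ((D : Set (V n)) + ({u} : Set (V n))).ncard
      = ((D : Set (V n)) + ({ρ u} : Set (V n))).ncard := by
    rw [Set.add_singleton, Set.add_singleton,
      Set.ncard_image_of_injective _ (add_left_injective u),
      Set.ncard_image_of_injective _ (add_left_injective (ρ u))]
  have h2 : (⇑ρ '' ((D : Set (V n)) + {u})).ncard = ((D : Set (V n)) + ({u} : Set (V n))).ncard :=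
    Set.ncard_image_of_injective _ ρ.injective
  exact Set.eq_of_subset_of_ncard_le hsub (le_of_eq (by rw [h2, h1])) (Set.toFinite _)
end

section
/- Let ρ be a permutation of V, let A be an additive subgroup of V, and let φ : A → V be an additive homomorphism with φ(A) ⊆ A. If U = {(a, φ(a)) : a ∈ A} ⊆ V × V is a linear block for ρ̄, then φ is injective. -/
open Pointwise

theorem linear_block_graph_injective {n : ℕ} (hn : 1 ≤ n) (ρ : Equiv.Perm (V n))
    (A : AddSubgroup (V n)) (φ : A →+ V n) (hA : ∀ a : A, φ a ∈ A)
    (h : IsLinearBlock (rhoBar ρ) {p : V n × V n | ∃ a : A, p = ((a : V n), φ a)}) :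
    Function.Injective φ := by
  set U : Set (V n × V n) := {p : V n × V n | ∃ a : A, p = ((a : V n), φ a)} with hUdef
  have key : ∀ c : A, φ c = 0 → c = 0 := by
    intro c hc
    by_contra hcne
    have hcV : (c : V n) ≠ 0 := fun h0 => hcne (Subtype.ext h0)
    have main : ∀ z : V n, ρ (z + (c : V n)) = ρ z := by
      intro z
      obtain ⟨q, hq⟩ := h (z, 0)
      have h0 : ((0 : V n), (0 : V n)) ∈ U := ⟨0, by simp⟩
      have hcU : (((c : V n)), (0 : V n)) ∈ U := ⟨c, by simp [hc]⟩
      have mem1 : (((0 : V n), (0 : V n)) + (z, 0)) ∈ U + {((z : V n), (0 : V n))} :=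
        Set.add_mem_add h0 rfl
      have mem2 : ((((c : V n)), (0 : V n)) + (z, 0)) ∈ U + {((z : V n), (0 : V n))} :=
        Set.add_mem_add hcU rfl
      have im1 : rhoBar ρ (((0 : V n), (0 : V n)) + (z, 0)) ∈ U + {q} :=
        hq ▸ Set.mem_image_of_mem _ mem1
      have im2 : rhoBar ρ ((((c : V n)), (0 : V n)) + (z, 0)) ∈ U + {q} :=
        hq ▸ Set.mem_image_of_mem _ mem2
      obtain ⟨w1, hw1, b1, hb1, he1⟩ := im1
      obtain ⟨w2, hw2, b2, hb2, he2⟩ := im2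
      rw [Set.mem_singleton_iff] at hb1 hb2
      rw [hb1] at he1
      rw [hb2] at he2
      obtain ⟨a1, rfl⟩ := hw1
      obtain ⟨a2, rfl⟩ := hw2
      -- compute the images
      have e1 : rhoBar ρ (((0 : V n), (0 : V n)) + (z, 0)) = (z, ρ z) := by
        simp [rhoBar, Equiv.coe_fn_mk]
      have e2 : rhoBar ρ ((((c : V n)), (0 : V n)) + (z, 0)) = ((c : V n) + z, ρ ((c : V n) + z)) := by
        simp [rhoBar, Equiv.coe_fn_mk]
      rw [e1] at he1
      rw [e2] at he2
      -- sum of the two equalities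
      have hsum : ((a1 : V n) + (a2 : V n), φ a1 + φ a2) = ((c : V n), ρ z + ρ ((c : V n) + z)) := by
        have := congrArg₂ (· + ·) he1 he2
        simp only [Prod.mk_add_mk, Prod.ext_iff] at this ⊢
        obtain ⟨t1, t2⟩ := this
        constructor
        · have : (a1 : V n) + q.1 + ((a2 : V n) + q.1) = z + ((c : V n) + z) := t1
          rw [show (a1 : V n) + q.1 + ((a2 : V n) + q.1) = (a1 : V n) + (a2 : V n) + (q.1 + q.1) by abel,
            V.add_self, add_zero] at this
          rw [this, show z + ((c : V n) + z) = (c : V n) + (z + z) by abel, V.add_self, add_zero]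
        · have : φ a1 + q.2 + (φ a2 + q.2) = ρ z + ρ ((c : V n) + z) := t2
          rw [show φ a1 + q.2 + (φ a2 + q.2) = φ a1 + φ a2 + (q.2 + q.2) by abel,
            V.add_self, add_zero] at this
          exact this
      obtain ⟨hfst, hsnd⟩ := Prod.ext_iff.mp hsum
      have ha : a1 + a2 = c := Subtype.ext (by simpa using hfst)
      have hphi : φ a1 + φ a2 = 0 := by
        have : φ (a1 + a2) = 0 := by rw [ha, hc]
        simpa using this
      rw [hphi] at hsnd
      have : ρ ((c : V n) + z) = ρ z := by
        have := congrArg (ρ z + ·) hsnd.symm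
        simpa [← add_assoc, V.add_self] using this
      rw [add_comm] at this
      exact this
    have := main 0
    rw [zero_add] at this
    exact hcV (ρ.injective this)
  intro a b hab
  have : φ (a - b) = 0 := by rw [map_sub, hab, sub_self]
  have := key _ this
  rwa [sub_eq_zero] at this
end

section
/- Let ρ be a permutation of V, let A be an additive subgroup of V, and let φ : A → V be an additive homomorphism. If U = {(a, φ(a)) : a ∈ A} ⊆ V × V is a linear block for ρ̄, then for every u ∈ V one has ρ(A + u) = A + ρ(u), where A + u denotes the coset {a + u : a ∈ A} in V. -/
open Pointwise

private lemma Vsolve {n : ℕ} {x y z : V n} (h : x + y = z) : y = x + z := by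
  rw [← h, ← add_assoc, V.add_self, zero_add]

theorem linear_block_graph_coset_compatibility {n : ℕ} (hn : 1 ≤ n) (ρ : Equiv.Perm (V n))
    (A : AddSubgroup (V n)) (φ : A →+ V n)
    (h : IsLinearBlock (rhoBar ρ) {p : V n × V n | ∃ a : A, p = ((a : V n), φ a)}) :
    ∀ u : V n, ⇑ρ '' ((A : Set (V n)) + {u}) = (A : Set (V n)) + {ρ u} := by
  classical
  intro u
  obtain ⟨q, hq⟩ := h (u, 0)
  set U : Set (V n × V n) := {p : V n × V n | ∃ a : A, p = ((a : V n), φ a)} with hUdef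
  have memdec : ∀ (p x : V n × V n),
      x ∈ U + {p} ↔ ∃ b : A, x = ((b : V n) + p.1, φ b + p.2) := by
    intro p x
    rw [Set.add_singleton]
    constructor
    · rintro ⟨y, ⟨b, rfl⟩, rfl⟩; exact ⟨b, rfl⟩
    · rintro ⟨b, rfl⟩; exact ⟨_, ⟨b, rfl⟩, rfl⟩
  have fform : ∀ a : A, rhoBar ρ ((a : V n) + u, φ a)
      = ((a : V n) + φ a + u, φ a + ρ ((a : V n) + φ a + u)) := by
    intro a
    show ((a : V n) + u + φ a, φ a + ρ ((a : V n) + u + φ a)) = _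
    rw [show (a : V n) + u + φ a = (a : V n) + φ a + u from by abel]
  have fmem : ∀ a : A,
      ((a : V n) + φ a + u, φ a + ρ ((a : V n) + φ a + u)) ∈ U + {q} := by
    intro a
    rw [← hq, ← fform a]
    exact ⟨((a : V n) + u, φ a), (memdec (u, 0) _).2 ⟨a, by simp⟩, rfl⟩
  -- the case a = 0 determines q up to an element b₀ of A
  obtain ⟨b₀, hb₀⟩ := (memdec q _).1 (fmem 0)
  have hb₀' : (u, ρ u) = ((b₀ : V n) + q.1, φ b₀ + q.2) := by
    rw [← hb₀]; simp
  have hq1 : (b₀ : V n) + q.1 = u := (congrArg Prod.fst hb₀').symm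
  have hq2 : φ b₀ + q.2 = ρ u := (congrArg Prod.snd hb₀').symm
  have hq1' : q.1 = (b₀ : V n) + u := Vsolve hq1
  have hq2' : q.2 = φ b₀ + ρ u := Vsolve hq2
  -- φ maps A into A
  have hφA : ∀ a : A, φ a ∈ A := by
    intro a
    obtain ⟨b, hb⟩ := (memdec q _).1 (fmem a)
    have h1 : (a : V n) + φ a + u = (b : V n) + q.1 := congrArg Prod.fst hb
    rw [hq1'] at h1
    have h1' : (a : V n) + φ a + u = ((b : V n) + (b₀ : V n)) + u := by
      rw [h1]; abel
    have h2 : (a : V n) + φ a = (b : V n) + (b₀ : V n) := add_right_cancel h1'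
    have h3 : φ a = ((a + b + b₀ : A) : V n) := by
      have := Vsolve h2
      rw [this]; push_cast; abel
    rw [h3]; exact (a + b + b₀).2
  -- forward inclusion
  have hsub : ⇑ρ '' ((A : Set (V n)) + {u}) ⊆ (A : Set (V n)) + {ρ u} := by
    rintro _ ⟨x, hx, rfl⟩
    rw [Set.add_singleton] at hx ⊢
    obtain ⟨c, hc, rfl⟩ := hx
    set cA : A := ⟨c, hc⟩ with hcA
    -- use surjectivity of hq to find a preimage of ((cA+b₀)+q.1, φ(cA+b₀)+q.2)
    have hmem : ((((cA + b₀ : A) : V n)) + q.1, φ (cA + b₀) + q.2) ∈ U + {q} :=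
      (memdec q _).2 ⟨cA + b₀, rfl⟩
    rw [← hq] at hmem
    obtain ⟨y, hy, hfy⟩ := hmem
    obtain ⟨a, rfl⟩ := (memdec (u, 0) y).1 hy
    have hy0 : ((a : V n) + u, φ a + 0) = ((a : V n) + u, φ a) := by rw [add_zero]
    rw [hy0, fform a] at hfy
    have h1 : (a : V n) + φ a + u = ((cA + b₀ : A) : V n) + q.1 := congrArg Prod.fst hfy
    have h2 : φ a + ρ ((a : V n) + φ a + u) = φ (cA + b₀) + q.2 := congrArg Prod.snd hfy
    rw [hq1'] at h1
    have h1' : (a : V n) + φ a + u = c + u := by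
      rw [h1]; push_cast [hcA]
      rw [show c + (b₀ : V n) + ((b₀ : V n) + u) = c + ((b₀ : V n) + (b₀ : V n)) + u from by
        abel, V.add_self, add_zero]
    have hkey : (a : V n) + φ a = c := add_right_cancel h1'
    rw [h1', hq2', map_add φ] at h2
    have h2' : φ a + ρ (c + u) = φ cA + ρ u := by
      rw [h2, show φ cA + φ b₀ + (φ b₀ + ρ u) = φ cA + (φ b₀ + φ b₀) + ρ u from by abel,
        V.add_self, add_zero]
    have h2'' : ρ (c + u) = φ (a + cA) + ρ u := by
      rw [map_add φ, Vsolve h2']; abel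
    exact ⟨φ (a + cA), hφA _, by simpa using h2''.symm⟩
  -- conclude by cardinality
  have hinj1 : Function.Injective (fun x : V n => x + u) := fun x y hxy => by
    simpa using congrArg (fun z => z + u) hxy
  have hinj2 : Function.Injective (fun x : V n => x + ρ u) := fun x y hxy => by
    simpa using congrArg (fun z => z + ρ u) hxy
  refine Set.eq_of_subset_of_ncard_le hsub ?_ (Set.toFinite _)
  rw [Set.add_singleton, Set.add_singleton, Set.ncard_image_of_injective _ ρ.injective,
    Set.ncard_image_of_injective _ hinj1, Set.ncard_image_of_injective _ hinj2]
end

section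
/- Let φ be a linear automorphism of V whose only fixed point is 0, and let ρ : V → V be a function satisfying ρ(a + φ(a) + u) = φ(φ(a)) + ρ(u) for all a, u ∈ V. Then ρ is affine: there exist a linear map L : V → V and a constant c ∈ V such that ρ(x) = L(x) + c for all x ∈ V. -/
open Pointwise

theorem rho_affine_of_functional_equation {n : ℕ} (hn : 1 ≤ n)
    (φ : V n ≃ₗ[ZMod 2] V n) (hfix : ∀ a : V n, φ a = a → a = 0)
    (ρ : V n → V n) (hρ : ∀ a u : V n, ρ (a + φ a + u) = φ (φ a) + ρ u) :
    ∃ (L : V n →ₗ[ZMod 2] V n) (c : V n), ∀ x : V n, ρ x = L x + c := by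
  set ψ : V n →ₗ[ZMod 2] V n := LinearMap.id + φ.toLinearMap with hψ
  have hinj : Function.Injective ψ := by
    rw [← LinearMap.ker_eq_bot, LinearMap.ker_eq_bot']
    intro a ha
    apply hfix
    have h1 : a + φ a = 0 := ha
    have h2 : φ a = φ a + (a + φ a) := by rw [h1, add_zero]
    rw [h2, show φ a + (a + φ a) = a + (φ a + φ a) by abel, V.add_self, add_zero]
  have hsurj : Function.Surjective ψ := by
    rwa [← LinearMap.injective_iff_surjective]
  let e := LinearEquiv.ofBijective ψ ⟨hinj, hsurj⟩
  refine ⟨(φ.toLinearMap ∘ₗ φ.toLinearMap) ∘ₗ e.symm.toLinearMap, ρ 0, fun x => ?_⟩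
  have hx : ψ (e.symm x) = x := e.apply_symm_apply x
  have h3 := hρ (e.symm x) 0
  rw [add_zero] at h3
  have hψx : (e.symm x : V n) + φ (e.symm x) = x := hx
  rw [hψx] at h3
  exact h3
end
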